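/- Let G = PGL(2,F). If f in S(G) is such that the restriction of f to the closed set N-bar of unipotent elements lies in K_u, then there exists epsilon > 0 such that the restriction of f to G^epsilon = { g in G : |p(g)| <= epsilon } lies in K, where p(g) = tr^2(g~)/det(g~) - 4 for a representative g~ in GL(2,F). -/

import Mathlib

/-!
Common setup: `F` a nonarchimedean local field (modelled as a complete,
locally compact, nontrivially normed field whose norm is nonarchimedean),
`PGL2 F = GL(2,F)/center` the projective linear group, Hecke algebra of
compactly supported locally constant functions (identified with measures via
a fixed Haar measure), weightless functions, and conjugation coinvariants.
-/

open MeasureTheory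

noncomputable section

/-- `GL(2,F)`. -/
abbrev GL2 (F : Type) [Field F] := Matrix.GeneralLinearGroup (Fin 2) F

/-- `PGL(2,F) = GL(2,F)/Z`. -/
abbrev PGL2 (F : Type) [Field F] := GL2 F ⧸ Subgroup.center (GL2 F)

variable {F : Type} [Field F]

/-- The projection `GL(2,F) → PGL(2,F)`. -/
def pgl : GL2 F →* PGL2 F := QuotientGroup.mk' _

/-- The standard unipotent matrix `[[1,x],[0,1]]`, as an element of `GL(2,F)`;
the standard unipotent radical `U` of the standard Borel is its image. -/
def unip (x : F) : GL2 F :=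
  ⟨Matrix.of ![![1, x], ![0, 1]], Matrix.of ![![1, -x], ![0, 1]],
    by ext i j; fin_cases i <;> fin_cases j <;>
      simp [Matrix.mul_apply, Fin.sum_univ_two],
    by ext i j; fin_cases i <;> fin_cases j <;>
      simp [Matrix.mul_apply, Fin.sum_univ_two]⟩

/-- The diagonal torus element `diag(a,1)` of `GL(2,F)`; the images of these
elements form the standard maximal (split) torus of `PGL(2,F)`. -/
def diagT (a : Fˣ) : GL2 F :=
  ⟨Matrix.of ![![(a : F), 0], ![0, 1]], Matrix.of ![![((a⁻¹ : Fˣ) : F), 0], ![0, 1]],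
    by ext i j; fin_cases i <;> fin_cases j <;>
      simp [Matrix.mul_apply, Fin.sum_univ_two],
    by ext i j; fin_cases i <;> fin_cases j <;>
      simp [Matrix.mul_apply, Fin.sum_univ_two]⟩

/-- Compactly supported locally constant complex functions on `X`
(the Hecke space `S(X)` once a Haar measure is fixed), as a subspace. -/
def heckeSpace (X : Type*) [TopologicalSpace X] : Submodule ℂ (X → ℂ) where
  carrier := {f | IsLocallyConstant f ∧ HasCompactSupport f}
  zero_mem' := ⟨IsLocallyConstant.const 0, HasCompactSupport.zero⟩
  add_mem' := fun hf hg => ⟨hf.1.add hg.1, hf.2.add hg.2⟩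
  smul_mem' := fun c f hf =>
    ⟨hf.1.comp (fun z => c * z),
     hf.2.mono (fun x hx => by
       simp only [Function.mem_support, Pi.smul_apply, smul_eq_mul] at hx ⊢
       exact fun h => hx (by rw [h, mul_zero]))⟩

/-- The conjugation action `(^g f)(x) = f (g⁻¹ x g)`. -/
def conjAct {G : Type*} [Group G] (g : G) (f : G → ℂ) : G → ℂ :=
  fun x => f (g⁻¹ * x * g)

/-- The subspace of a `G`-stable space `V` of functions on `G` spanned by
elements of the form `^g w - w`; the quotient `V ⧸ conjRel V` is the space
`H_0(G, V)` of conjugation coinvariants. -/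
def conjRel {G : Type*} [Group G] (V : Submodule ℂ (G → ℂ)) : Submodule ℂ V :=
  Submodule.span ℂ {v : V | ∃ (g : G) (w : V), (v : G → ℂ) = conjAct g w - w}

/-- `H_0(G, V)`: the conjugation coinvariants of `V`. -/
abbrev coinvariants {G : Type*} [Group G] (V : Submodule ℂ (G → ℂ)) :=
  V ⧸ conjRel V

variable {F : Type} [NontriviallyNormedField F] [CompleteSpace F]
  [LocallyCompactSpace F] [CharZero F]
  [MeasurableSpace F] [BorelSpace F]
  [MeasurableSpace (PGL2 F)] [BorelSpace (PGL2 F)]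

/-- `p(g) = tr(g~)²/det(g~) - 4`, computed on any representative `g~ ∈ GL(2,F)`
of `g ∈ PGL(2,F)` (the value is independent of the representative). -/
def pOf (g : PGL2 F) : F :=
  (Matrix.trace ((Quotient.out g : GL2 F) : Matrix (Fin 2) (Fin 2) F)) ^ 2 /
    (Matrix.det ((Quotient.out g : GL2 F) : Matrix (Fin 2) (Fin 2) F)) - 4

/-- The set `G_s` of regular split semisimple elements of `PGL(2,F)`:
conjugates of nontrivial diagonal elements. -/
def splitRegSet (F : Type) [NontriviallyNormedField F] : Set (PGL2 F) :=
  {h | ∃ (k : PGL2 F) (a : Fˣ), (a : F) ≠ 1 ∧ h = k * pgl (diagT a) * k⁻¹}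

/-- The conjugacy class of `g₀`. -/
def conjClass {G : Type*} [Group G] (g₀ : G) : Set G :=
  {h | ∃ k : G, h = k * g₀ * k⁻¹}

/-- The space `K(X)` of weightless measures supported on a conjugation
invariant subset `X ⊆ PGL(2,F)`: compactly supported locally constant
functions `f` supported on `X` such that `∫_{U_Q} f(l·u) du = 0` for every
proper parabolic (= Borel) subgroup `Q = L·U_Q` and every `l ∈ L` with
`l·U_Q ⊆ X`.  Every pair (Borel subgroup, Levi = maximal torus, element `l`)
of `PGL(2,F)` is conjugate to a standard one, so the condition is stated for
all conjugates of the standard pair; the (mathematically automatic)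
integrability of the restriction to the coset is included so that `K(X)` is a
subspace.  For `X = univ` this is the space `K` of weightless functions. -/
def Kspace (μF : Measure F) (X : Set (PGL2 F)) : Submodule ℂ (PGL2 F → ℂ) where
  carrier := {f | IsLocallyConstant f ∧ HasCompactSupport f ∧
    tsupport f ⊆ X ∧
    ∀ (g : PGL2 F) (b : Fˣ),
      (∀ x : F, g * pgl (diagT b * unip x) * g⁻¹ ∈ X) →
      Integrable (fun x : F => f (g * pgl (diagT b * unip x) * g⁻¹)) μF ∧
      ∫ x : F, f (g * pgl (diagT b * unip x) * g⁻¹) ∂μF = 0}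
  zero_mem' := by
    refine ⟨IsLocallyConstant.const 0, HasCompactSupport.zero, by simp [tsupport],
      fun g b _ => ?_⟩
    simp only [Pi.zero_apply]
    exact ⟨integrable_zero F ℂ μF, integral_zero F ℂ⟩
  add_mem' := by
    rintro f h ⟨lf, cf, sf, wf⟩ ⟨lh, ch, sh, wh⟩
    refine ⟨lf.add lh, cf.add ch, ?_, fun g b hX => ?_⟩
    · refine ((closure_mono (Function.support_add f h)).trans ?_)
      rw [closure_union]
      exact Set.union_subset sf sh
    · obtain ⟨If, Ef⟩ := wf g b hX
      obtain ⟨Ih, Eh⟩ := wh g b hX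
      have hfun : (fun x : F => (f + h) (g * pgl (diagT b * unip x) * g⁻¹)) =
          fun x : F => f (g * pgl (diagT b * unip x) * g⁻¹) +
            h (g * pgl (diagT b * unip x) * g⁻¹) := rfl
      rw [hfun]
      exact ⟨If.add Ih, by rw [integral_add If Ih, Ef, Eh, add_zero]⟩
  smul_mem' := by
    rintro c f ⟨lf, cf, sf, wf⟩
    have hsupp : Function.support (c • f) ⊆ Function.support f := fun x hx => by
      simp only [Function.mem_support, Pi.smul_apply, smul_eq_mul] at hx ⊢
      exact fun h => hx (by rw [h, mul_zero])
    refine ⟨lf.comp (fun z => c * z), cf.mono hsupp,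
      (closure_mono hsupp).trans sf, fun g b hX => ?_⟩
    obtain ⟨If, Ef⟩ := wf g b hX
    have hfun : (fun x : F => (c • f) (g * pgl (diagT b * unip x) * g⁻¹)) =
        fun x : F => c • f (g * pgl (diagT b * unip x) * g⁻¹) := rfl
    rw [hfun]
    exact ⟨If.smul c, by rw [integral_smul, Ef, smul_zero]⟩

/-- The subspace of the space `K = Kspace μF univ` of weightless functions
consisting of functions supported on a (conjugation invariant) subset `X`. -/
def KsuppIn (μF : Measure F) (X : Set (PGL2 F)) : Submodule ℂ (PGL2 F → ℂ) :=
  Kspace μF Set.univ ⊓ Submodule.mk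
    (toAddSubmonoid := {
      carrier := {f | tsupport f ⊆ X}
      zero_mem' := by simp [tsupport]
      add_mem' := by
        intro f h sf sh
        refine ((closure_mono (Function.support_add f h)).trans ?_)
        rw [closure_union]
        exact Set.union_subset sf sh })
    (by
      intro c f sf
      refine Set.Subset.trans (closure_mono ?_) sf
      intro x hx
      simp only [Function.mem_support, Pi.smul_apply, smul_eq_mul] at hx ⊢
      exact fun h => hx (by rw [h, mul_zero]))

/-- The distribution `f̂` obtained by averaging `f` over conjugation, paired
against a test function `h`:
`⟨f̂, h⟩ = ∫_G ⟨^g f, h⟩ dg = ∫_G ∫_G f(g⁻¹ x g) h(x) dx dg`. -/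
def fhat (μG : Measure (PGL2 F)) (f h : PGL2 F → ℂ) : ℂ :=
  ∫ g : PGL2 F, ∫ x : PGL2 F, f (g⁻¹ * x * g) * h x ∂μG ∂μG

/-- A smooth representation of a topological group `G` on a complex vector
space: every vector has open stabilizer. -/
structure SmoothRepn (G : Type*) [Group G] [TopologicalSpace G] where
  (V : Type)
  [acg : AddCommGroup V]
  [mod : Module ℂ V]
  (ρ : G →* Module.End ℂ V)
  (smooth : ∀ v : V, IsOpen {g : G | ρ g v = v})

attribute [instance] SmoothRepn.acg SmoothRepn.mod

/-- The `K`-fixed vectors of a smooth representation. -/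
def SmoothRepn.fixedBy {G : Type*} [Group G] [TopologicalSpace G]
    (R : SmoothRepn G) (K : Subgroup G) : Submodule ℂ R.V where
  carrier := {v | ∀ k ∈ K, R.ρ k v = v}
  zero_mem' := fun k _ => map_zero (R.ρ k)
  add_mem' := by
    intro a b ha hb k hk
    rw [map_add, ha k hk, hb k hk]
  smul_mem' := by
    intro c v hv k hk
    rw [_root_.map_smul, hv k hk]

/-- Admissibility: the fixed vectors of every compact open subgroup form a
finite dimensional space. -/
def SmoothRepn.IsAdmissible {G : Type*} [Group G] [TopologicalSpace G]
    (R : SmoothRepn G) : Prop :=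
  ∀ K : Subgroup G, IsOpen (K : Set G) → IsCompact (K : Set G) →
    FiniteDimensional ℂ (R.fixedBy K)

/-- Irreducibility. -/
def SmoothRepn.IsIrreducible {G : Type*} [Group G] [TopologicalSpace G]
    (R : SmoothRepn G) : Prop :=
  Nontrivial R.V ∧ ∀ W : Submodule ℂ R.V,
    (∀ (g : G), ∀ v ∈ W, R.ρ g v ∈ W) → W = ⊥ ∨ W = ⊤

/-- The integral of a compactly supported locally constant function valued in
a complex vector space (without topology): such a function takes finitely many
values, each on a measurable set of finite measure, and the integral is the
corresponding finite weighted sum.  (Junk value `0` if the function does not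
have this form.) -/
def weakIntegral {G V : Type*} [MeasurableSpace G] [AddCommGroup V]
    [Module ℂ V] (μ : MeasureTheory.Measure G) (φ : G → V) : V :=
  letI := Classical.dec
  if h : {c : V | c ≠ 0 ∧ φ ⁻¹' {c} ≠ ∅ ∧ μ (φ ⁻¹' {c}) ≠ ⊤}.Finite ∧
      {c : V | c ≠ 0 ∧ φ ⁻¹' {c} ≠ ∅ ∧ μ (φ ⁻¹' {c}) = ⊤} = ∅ then
    ∑ c ∈ h.1.toFinset, (((μ (φ ⁻¹' {c})).toReal : ℝ) : ℂ) • c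
  else 0

/-- `α` is the character distribution of the representation `R`:
for every `f` in the Hecke algebra, `α(f) = Tr ρ(f)` where
`ρ(f) = ∫ f(g) ρ(g) dg`; the trace is computed on any finite dimensional
subspace through which `ρ(f)` factors (for admissible `R` such a subspace
exists and the trace does not depend on the choice). -/
def IsCharacterOf {G : Type*} [Group G] [TopologicalSpace G]
    [MeasurableSpace G] (μG : MeasureTheory.Measure G)
    (α : (G → ℂ) → ℂ) (R : SmoothRepn G) : Prop :=
  ∀ f : G → ℂ, IsLocallyConstant f → HasCompactSupport f →
    ∀ φ : Module.End ℂ R.V,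
      (∀ v, φ v = weakIntegral μG (fun g => f g • R.ρ g v)) →
      ∀ (W : Submodule ℂ R.V), FiniteDimensional ℂ W →
        ∀ (hr : LinearMap.range φ ≤ W),
          α f = LinearMap.trace ℂ W
            (φ.restrict (fun x _ => hr (LinearMap.mem_range_self φ x)))

/-- Two distributions have the same germ at the identity: they agree on all
test functions supported in some open neighbourhood of `1`. -/
def GermEqAtOne {G : Type*} [Group G] [TopologicalSpace G] [One G]
    (α β : (G → ℂ) → ℂ) : Prop :=
  ∃ U : Set G, IsOpen U ∧ (1 : G) ∈ U ∧
    ∀ h : G → ℂ, IsLocallyConstant h → HasCompactSupport h →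
      tsupport h ⊆ U → α h = β h

/-- Cuspidality of a smooth representation of `PGL(2,F)`: the Jacquet module
with respect to (the unipotent radical of) a Borel subgroup vanishes, i.e.
every vector is a linear combination of vectors `ρ(u)v - v`, `u ∈ U`. -/
def IsCuspidal (R : SmoothRepn (PGL2 F)) : Prop :=
  ∀ v : R.V, v ∈ Submodule.span ℂ
    {w : R.V | ∃ (x : F) (v' : R.V), w = R.ρ (pgl (unip x)) v' - v'}

/-- Membership in the space `E` of invariant distributions `α` on
`G = PGL(2,F)` such that: `α` is linear and conjugation invariant; the support
of `α` is contained in the conjugation saturation of a compact set; the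
restriction of `α` to `G ∖ {e}` is a locally constant function; and the germ
of `α` at `e` lies in the span `D_e` of germs at `e` of characters of
irreducible (smooth admissible) representations. -/
def memE (μG : Measure (PGL2 F)) (α : (PGL2 F → ℂ) → ℂ) : Prop :=
  (∀ h₁ h₂, h₁ ∈ heckeSpace (PGL2 F) → h₂ ∈ heckeSpace (PGL2 F) →
      α (h₁ + h₂) = α h₁ + α h₂) ∧
  (∀ (c : ℂ) h, h ∈ heckeSpace (PGL2 F) → α (c • h) = c * α h) ∧
  (∀ (g : PGL2 F) h, h ∈ heckeSpace (PGL2 F) → α (conjAct g h) = α h) ∧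
  (∃ C : Set (PGL2 F), IsCompact C ∧
    ∀ h ∈ heckeSpace (PGL2 F),
      (∀ x ∈ tsupport h, ¬ ∃ c ∈ C, ∃ k : PGL2 F, x = k * c * k⁻¹) →
      α h = 0) ∧
  (∃ φ : PGL2 F → ℂ,
    IsLocallyConstant (Set.restrict {(1 : PGL2 F)}ᶜ φ) ∧
    ∀ h ∈ heckeSpace (PGL2 F), tsupport h ⊆ {(1 : PGL2 F)}ᶜ →
      α h = ∫ x, φ x * h x ∂μG) ∧
  (∃ (k : ℕ) (c : Fin k → ℂ) (R : Fin k → SmoothRepn (PGL2 F))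
      (χ : Fin k → (PGL2 F → ℂ) → ℂ),
    (∀ i, (R i).IsAdmissible ∧ (R i).IsIrreducible ∧
      IsCharacterOf μG (χ i) (R i)) ∧
    GermEqAtOne α (fun h => ∑ i, c i * χ i h))

/-- The closed set `N̄` of unipotent elements of `PGL(2,F)`: the elements
with `p(g) = 0` (representatives with a double eigenvalue). -/
def unipSet (F : Type) [NontriviallyNormedField F] : Set (PGL2 F) :=
  {g | pOf g = 0}

/-- The set `G^ε = {g : |p(g)| ≤ ε}`. -/
def Geps (F : Type) [NontriviallyNormedField F] (ε : ℝ) : Set (PGL2 F) :=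
  {g | ‖pOf g‖ ≤ ε}

/-!
The invariant `p` equals `(b-1)²/b` on the whole coset `g·diag(b,1)·U·g⁻¹`, so the coset lies
entirely inside or entirely outside `G^ε`, and in the first case `b` is close to `1` when `ε` is
small. Write `g = k·β` with `β` upper triangular and `k` in a fixed compact set. Conjugation by
`β` turns `diag(b,1)·u(x)` into `u(y)·diag(b,1)` with `y` affine in `x`, so the coset element is
`(k·u(y)·k⁻¹)·(k·diag(b,1)·k⁻¹)`. A locally constant compactly supported `f` is invariant under
right multiplication by conjugates, by elements of a compact set, of elements close to `1`.
Hence on the coset `f` is a translate of its restriction to a unipotent orbit `g'·U·g'⁻¹`, whose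
integral vanishes by hypothesis.
-/

open Topology Filter

theorem IsLocallyConstant.exists_mem_nhds_one_forall_mul_conj_eq {G α : Type*} [Group G]
    [TopologicalSpace G] [IsTopologicalGroup G] [Zero α] {f : G → α}
    (hf : IsLocallyConstant f) (hc : HasCompactSupport f) {K : Set G} (hK : IsCompact K) :
    ∃ W ∈ 𝓝 (1 : G), ∀ k ∈ K, ∀ w ∈ W, ∀ m, f (m * (k * w * k⁻¹)) = f m := by
  let n : Set ((G × G) × G) := {p | f (p.1.1 * (p.1.2 * p.2 * p.1.2⁻¹)) = f p.1.1}
  have hn : IsOpen n := by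
    have h₁ := hf.comp_continuous
      (f := fun p : (G × G) × G => p.1.1 * (p.1.2 * p.2 * p.1.2⁻¹)) (by fun_prop)
    have h₂ := hf.comp_continuous (f := fun p : (G × G) × G => p.1.1) (by fun_prop)
    simpa using (h₁.comp₂ h₂ (· = ·)).isOpen_fiber True
  obtain ⟨U, V, -, hV, hU, hV1, hUV⟩ :=
    generalized_tube_lemma (hc.prod hK) isCompact_singleton hn
      (by rintro ⟨⟨m, k⟩, w⟩ ⟨-, rfl : w = 1⟩; simp [n])
  have hfV : ∀ m ∈ tsupport f, ∀ k ∈ K, ∀ w ∈ V, f (m * (k * w * k⁻¹)) = f m :=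
    fun m hm k hk w hw => @hUV ((m, k), w) ⟨hU ⟨hm, hk⟩, hw⟩
  have hV1 : V ∈ 𝓝 1 := hV.mem_nhds (hV1 rfl)
  refine ⟨V ∩ V⁻¹, inter_mem hV1 (inv_mem_nhds_one G hV1), fun k hk w hw m => ?_⟩
  by_cases hm : m ∈ tsupport f
  · exact hfV m hm k hk w hw.1
  by_cases hm' : m * (k * w * k⁻¹) ∈ tsupport f
  · -- `m` is recovered from `m * (k * w * k⁻¹) ∈ tsupport f` by the conjugate of `w⁻¹ ∈ V`
    have := hfV _ hm' k hk w⁻¹ hw.2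
    rwa [show m * (k * w * k⁻¹) * (k * w⁻¹ * k⁻¹) = m by group, eq_comm] at this
  · rw [image_eq_zero_of_notMem_tsupport hm, image_eq_zero_of_notMem_tsupport hm']

theorem norm_sub_one_sq_le_of_norm_sub_one_sq_div_lt {K : Type*} [NormedField K] {x : K}
    (hx : x ≠ 0) (h : ‖(x - 1) ^ 2 / x‖ < 1 / 2) :
    ‖x - 1‖ ^ 2 ≤ 2 * ‖(x - 1) ^ 2 / x‖ := by
  set q := ‖(x - 1) ^ 2 / x‖
  have hle : ‖x - 1‖ ^ 2 ≤ q * (‖x - 1‖ + 1) := by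
    rw [← norm_pow, ← div_mul_cancel₀ ((x - 1) ^ 2) hx, norm_mul]
    gcongr
    simpa using norm_add_le (x - 1) 1
  have hlt : ‖x - 1‖ < 1 := by nlinarith [norm_nonneg (x - 1)]
  nlinarith [norm_nonneg ((x - 1) ^ 2 / x)]

section Field

variable {F : Type} [Field F]

@[simp] lemma unip_val (x : F) :
    ((unip x : GL2 F) : Matrix (Fin 2) (Fin 2) F) = Matrix.of ![![1, x], ![0, 1]] := rfl

@[simp] lemma diagT_val (a : Fˣ) :
    ((diagT a : GL2 F) : Matrix (Fin 2) (Fin 2) F) = Matrix.of ![![(a : F), 0], ![0, 1]] := rfl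

lemma diagT_one : (diagT 1 : GL2 F) = 1 := by
  ext i j
  fin_cases i <;> fin_cases j <;> simp

lemma diagT_conj_unip (c : Fˣ) (x : F) :
    diagT c * unip x * (diagT c)⁻¹ = unip (c * x) := by
  rw [mul_inv_eq_iff_eq_mul]
  ext i j
  fin_cases i <;> fin_cases j <;> simp [Matrix.mul_apply, Fin.sum_univ_two]

lemma diagT_mul_unip_conj (a b : Fˣ) (x₀ x : F) :
    (diagT a * unip x₀) * (diagT b * unip x) * (diagT a * unip x₀)⁻¹ =
      unip ((a : F) * b * x + a * (1 - b) * x₀) * diagT b := by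
  rw [mul_inv_eq_iff_eq_mul]
  ext i j
  fin_cases i <;> fin_cases j <;> simp [Matrix.mul_apply, Fin.sum_univ_two] <;> ring

lemma exists_pgl_eq_diagT_mul_unip {M : GL2 F} (hM : (M : Matrix (Fin 2) (Fin 2) F) 1 0 = 0) :
    ∃ (a : Fˣ) (x₀ : F), pgl M = pgl (diagT a * unip x₀) := by
  have hdet : (M : Matrix (Fin 2) (Fin 2) F) 0 0 * M 1 1 ≠ 0 := by
    simpa [Matrix.det_fin_two, hM] using M.det.ne_zero
  have h0 := left_ne_zero_of_mul hdet
  have h1 := right_ne_zero_of_mul hdet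
  refine ⟨Units.mk0 _ (div_ne_zero h0 h1), M 0 1 / M 0 0, (QuotientGroup.mk'_eq_mk' _).mpr ?_⟩
  refine ⟨_, Matrix.GeneralLinearGroup.center_eq_range_scalar.ge
    ⟨Units.mk0 _ (inv_ne_zero h1), rfl⟩, ?_⟩
  ext i j
  fin_cases i <;> fin_cases j <;> simp [Matrix.mul_apply, Fin.sum_univ_two, hM] <;> field_simp

def lowerUnip (x : F) : GL2 F :=
  ⟨!![1, 0; x, 1], !![1, 0; -x, 1],
    by ext i j; fin_cases i <;> fin_cases j <;> simp [Matrix.mul_apply, Fin.sum_univ_two],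
    by ext i j; fin_cases i <;> fin_cases j <;> simp [Matrix.mul_apply, Fin.sum_univ_two]⟩

def weyl : GL2 F :=
  ⟨!![0, 1; 1, 0], !![0, 1; 1, 0],
    by ext i j; fin_cases i <;> fin_cases j <;> simp [Matrix.mul_apply, Fin.sum_univ_two],
    by ext i j; fin_cases i <;> fin_cases j <;> simp [Matrix.mul_apply, Fin.sum_univ_two]⟩

@[simp] lemma lowerUnip_inv_val (x : F) :
    (((lowerUnip x)⁻¹ : GL2 F) : Matrix (Fin 2) (Fin 2) F) = !![1, 0; -x, 1] := rfl

@[simp] lemma weyl_val : ((weyl : GL2 F) : Matrix (Fin 2) (Fin 2) F) = !![0, 1; 1, 0] := rfl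

end Field

section NormedField

variable {F : Type} [NormedField F]

def borelCosetReps (F : Type) [NormedField F] : Set (GL2 F) :=
  lowerUnip '' Metric.closedBall 0 1 ∪ (fun s => weyl⁻¹ * lowerUnip s) '' Metric.closedBall 0 1

lemma exists_lowerUnip_inv_mul_apply_one_zero {N : GL2 F}
    (hN : ‖(N : Matrix (Fin 2) (Fin 2) F) 1 0‖ ≤ ‖(N : Matrix (Fin 2) (Fin 2) F) 0 0‖) :
    ∃ s ∈ Metric.closedBall (0 : F) 1,
      (((lowerUnip s)⁻¹ * N : GL2 F) : Matrix (Fin 2) (Fin 2) F) 1 0 = 0 := by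
  refine ⟨N 1 0 / N 0 0, by simpa [norm_div] using div_le_one_of_le₀ hN (norm_nonneg _), ?_⟩
  rw [Units.val_mul, lowerUnip_inv_val]
  rcases eq_or_ne ((N : Matrix (Fin 2) (Fin 2) F) 0 0) 0 with h | h
  · -- then `hN` forces `N 1 0 = 0`, whatever the junk value `N 1 0 / 0` is
    simp_all [Matrix.mul_apply, Fin.sum_univ_two]
  · simp only [Matrix.mul_apply, Fin.sum_univ_two, Matrix.of_apply, Matrix.cons_val',
      Matrix.cons_val_fin_one, Matrix.cons_val_one, Matrix.cons_val_zero, neg_mul, one_mul]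
    field_simp
    ring

lemma exists_borelCosetReps_inv_mul_apply_one_zero (N : GL2 F) :
    ∃ k ∈ borelCosetReps F, ((k⁻¹ * N : GL2 F) : Matrix (Fin 2) (Fin 2) F) 1 0 = 0 := by
  rcases le_or_gt ‖(N : Matrix (Fin 2) (Fin 2) F) 1 0‖ ‖(N : Matrix (Fin 2) (Fin 2) F) 0 0‖
    with h | h
  · obtain ⟨s, hs, hs0⟩ := exists_lowerUnip_inv_mul_apply_one_zero h
    exact ⟨_, Or.inl ⟨s, hs, rfl⟩, hs0⟩
  · obtain ⟨s, hs, hs0⟩ := exists_lowerUnip_inv_mul_apply_one_zero (N := weyl * N)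
      (by simpa [Matrix.mul_apply, Fin.sum_univ_two] using h.le)
    refine ⟨_, Or.inr ⟨s, hs, rfl⟩, ?_⟩
    rwa [mul_inv_rev, inv_inv, mul_assoc]

lemma exists_borelCosetReps_mul_diagT_mul_unip (g : PGL2 F) :
    ∃ k ∈ borelCosetReps F, ∃ (a : Fˣ) (x₀ : F), g = pgl k * pgl (diagT a * unip x₀) := by
  obtain ⟨N, rfl⟩ := QuotientGroup.mk'_surjective _ g
  obtain ⟨k, hk, hk0⟩ := exists_borelCosetReps_inv_mul_apply_one_zero N
  obtain ⟨a, x₀, h⟩ := exists_pgl_eq_diagT_mul_unip hk0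
  refine ⟨k, hk, a, x₀, ?_⟩
  rw [← h, ← map_mul, mul_inv_cancel_left]
  rfl

lemma continuous_lowerUnip : Continuous (lowerUnip : F → GL2 F) := by
  refine Units.continuous_iff.mpr ⟨?_, ?_⟩
  · change Continuous fun x : F => !![1, 0; x, 1]
    fun_prop
  · change Continuous fun x : F => !![1, 0; -x, 1]
    fun_prop

lemma continuous_diagT : Continuous (diagT : Fˣ → GL2 F) := by
  refine Units.continuous_iff.mpr ⟨?_, ?_⟩
  · change Continuous fun b : Fˣ => Matrix.of ![![(b : F), 0], ![0, 1]]
    fun_prop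
  · change Continuous fun b : Fˣ => Matrix.of ![![((b⁻¹ : Fˣ) : F), 0], ![0, 1]]
    fun_prop

lemma exists_pos_forall_norm_le_pgl_diagT_mem {W : Set (PGL2 F)} (hW : W ∈ 𝓝 1) :
    ∃ ε > 0, ∀ b : Fˣ, ‖((b : F) - 1) ^ 2 / b‖ ≤ ε → pgl (diagT b) ∈ W := by
  have h1 : (fun b : Fˣ => pgl (diagT b)) ⁻¹' W ∈ 𝓝 (1 : Fˣ) :=
    (QuotientGroup.continuous_mk.comp continuous_diagT).continuousAt.preimage_mem_nhds
      (by simpa [diagT_one] using hW)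
  rw [Units.isEmbedding_val₀.isInducing.nhds_eq_comap, Units.val_one] at h1
  obtain ⟨t, ht, hts⟩ := h1
  obtain ⟨δ, hδ, hδt⟩ := Metric.mem_nhds_iff.mp ht
  refine ⟨min (1 / 4) (δ ^ 2 / 4), by positivity, fun b hb => hts (hδt ?_)⟩
  have hsq := norm_sub_one_sq_le_of_norm_sub_one_sq_div_lt b.ne_zero
    (hb.trans_lt ((min_le_left _ _).trans_lt (by norm_num)))
  have : ‖(b : F) - 1‖ ^ 2 < δ ^ 2 := by
    nlinarith [min_le_right (1 / 4 : ℝ) (δ ^ 2 / 4)]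
  rw [Metric.mem_ball, dist_eq_norm]
  exact (abs_lt_of_sq_lt_sq' this hδ.le).2

end NormedField

section NontriviallyNormedField

variable {F : Type} [NontriviallyNormedField F]

lemma isCompact_borelCosetReps [LocallyCompactSpace F] : IsCompact (borelCosetReps F) := by
  have := ProperSpace.of_nontriviallyNormedField_of_weaklyLocallyCompactSpace F
  exact ((isCompact_closedBall 0 1).image continuous_lowerUnip).union
    ((isCompact_closedBall 0 1).image (continuous_const.mul continuous_lowerUnip))

lemma pOf_pgl (M : GL2 F) :
    pOf (pgl M) =
      Matrix.trace (M : Matrix (Fin 2) (Fin 2) F) ^ 2 / (M : Matrix (Fin 2) (Fin 2) F).det - 4 := by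
  obtain ⟨z, hz, hzM⟩ := (QuotientGroup.mk'_eq_mk' _).mp (Quotient.out_eq (pgl M))
  rw [pOf]
  generalize Quotient.out (pgl M) = N at hzM ⊢
  rw [Matrix.GeneralLinearGroup.center_eq_range_scalar] at hz
  obtain ⟨u, rfl⟩ := hz
  subst hzM
  have hdet := N.det.ne_zero
  have hu := u.ne_zero
  simp only [Units.val_mul, Matrix.GeneralLinearGroup.coe_scalar, Matrix.scalar_apply,
    Matrix.mul_diagonal, Matrix.trace_fin_two, Matrix.det_fin_two,
    Matrix.GeneralLinearGroup.val_det_apply] at hdet ⊢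
  field_simp

lemma pOf_conj (g h : PGL2 F) : pOf (g * h * g⁻¹) = pOf h := by
  obtain ⟨A, rfl⟩ := QuotientGroup.mk'_surjective _ g
  obtain ⟨B, rfl⟩ := QuotientGroup.mk'_surjective _ h
  change pOf (pgl A * pgl B * (pgl A)⁻¹) = pOf (pgl B)
  rw [← map_inv, ← map_mul, ← map_mul, pOf_pgl, pOf_pgl, Units.val_mul, Units.val_mul,
    Matrix.trace_mul_cycle, Units.inv_mul, Matrix.one_mul,
    Matrix.det_conj_of_mul_eq_one A.mul_inv A.inv_mul]

lemma pOf_pgl_diagT_mul_unip (b : Fˣ) (x : F) :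
    pOf (pgl (diagT b * unip x)) = ((b : F) - 1) ^ 2 / b := by
  have htr : Matrix.trace ((diagT b * unip x : GL2 F) : Matrix (Fin 2) (Fin 2) F) = b + 1 := by
    simp [Matrix.trace_fin_two]
  have hdet : ((diagT b * unip x : GL2 F) : Matrix (Fin 2) (Fin 2) F).det = b := by
    simp [Matrix.det_fin_two]
  have hb := b.ne_zero
  rw [pOf_pgl, htr, hdet]
  field_simp
  ring

lemma pOf_pgl_unip (x : F) : pOf (pgl (unip x)) = 0 := by
  simpa [diagT_one] using pOf_pgl_diagT_mul_unip 1 x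

lemma exists_conj_unip_add_mul_conj_diagT (g : PGL2 F) (b : Fˣ) :
    ∃ k ∈ pgl '' borelCosetReps F, ∃ (g' : PGL2 F) (d : F), ∀ x : F,
      g * pgl (diagT b * unip x) * g⁻¹ =
        g' * pgl (unip (x + d)) * g'⁻¹ * (k * pgl (diagT b) * k⁻¹) := by
  obtain ⟨k, hk, a, x₀, rfl⟩ := exists_borelCosetReps_mul_diagT_mul_unip g
  refine ⟨pgl k, ⟨k, hk, rfl⟩, pgl (k * diagT (a * b)), (1 - b) * x₀ / b, fun x => ?_⟩
  have hb := b.ne_zero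
  have hy : ((a * b : Fˣ) : F) * (x + (1 - b) * x₀ / b) = a * b * x + a * (1 - b) * x₀ := by
    push_cast
    field_simp
  have hconj : k * (diagT a * unip x₀) * (diagT b * unip x) * (k * (diagT a * unip x₀))⁻¹ =
      k * diagT (a * b) * unip (x + (1 - b) * x₀ / b) * (k * diagT (a * b))⁻¹ *
        (k * diagT b * k⁻¹) := calc
    _ = k * ((diagT a * unip x₀) * (diagT b * unip x) * (diagT a * unip x₀)⁻¹) * k⁻¹ := by
      group
    _ = k * (diagT (a * b) * unip (x + (1 - b) * x₀ / b) * (diagT (a * b))⁻¹ * diagT b) * k⁻¹ := by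
      rw [diagT_mul_unip_conj, diagT_conj_unip, hy]
    _ = _ := by group
  simpa only [map_mul, map_inv] using congrArg pgl hconj

end NontriviallyNormedField

theorem statement6_general
    (μF : Measure F) [μF.IsAddHaarMeasure]
    (f : PGL2 F → ℂ) (hlc : IsLocallyConstant f) (hcs : HasCompactSupport f)
    (hres : ∀ g : PGL2 F,
      Integrable
        (fun x : F => (unipSet F).indicator f (g * pgl (unip x) * g⁻¹)) μF ∧
      ∫ x : F, (unipSet F).indicator f (g * pgl (unip x) * g⁻¹) ∂μF = 0) :
    ∃ ε : ℝ, 0 < ε ∧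
      ∀ (g : PGL2 F) (b : Fˣ),
        Integrable
          (fun x : F =>
            (Geps F ε).indicator f (g * pgl (diagT b * unip x) * g⁻¹)) μF ∧
        ∫ x : F,
            (Geps F ε).indicator f (g * pgl (diagT b * unip x) * g⁻¹) ∂μF
          = 0 := by
  obtain ⟨W, hW, hfW⟩ := hlc.exists_mem_nhds_one_forall_mul_conj_eq hcs
    (isCompact_borelCosetReps.image QuotientGroup.continuous_mk)
  obtain ⟨ε, hε, hεW⟩ := exists_pos_forall_norm_le_pgl_diagT_mem hW
  refine ⟨ε, hε, fun g b => ?_⟩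
  obtain ⟨k, hk, g', d, hg'⟩ := exists_conj_unip_add_mul_conj_diagT g b
  have hGeps : ∀ x, g * pgl (diagT b * unip x) * g⁻¹ ∈ Geps F ε ↔
      ‖((b : F) - 1) ^ 2 / b‖ ≤ ε := fun x => by
    change ‖pOf _‖ ≤ ε ↔ _
    rw [pOf_conj, pOf_pgl_diagT_mul_unip]
  by_cases hb : ‖((b : F) - 1) ^ 2 / b‖ ≤ ε
  · have hcoset : ∀ x, (Geps F ε).indicator f (g * pgl (diagT b * unip x) * g⁻¹) =
        (unipSet F).indicator f (g' * pgl (unip (x + d)) * g'⁻¹) := fun x => by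
      rw [Set.indicator_of_mem ((hGeps x).2 hb),
        Set.indicator_of_mem (by simp [unipSet, pOf_conj, pOf_pgl_unip]), hg',
        hfW k hk _ (hεW b hb)]
    simp only [hcoset]
    exact ⟨(hres g').1.comp_add_right d,
      (integral_add_right_eq_self (fun y => (unipSet F).indicator f (g' * pgl (unip y) * g'⁻¹))
        d).trans (hres g').2⟩
  · have hzero : ∀ x, (Geps F ε).indicator f (g * pgl (diagT b * unip x) * g⁻¹) = 0 :=
      fun x => Set.indicator_of_notMem (mt (hGeps x).1 hb) _
    simp only [hzero]
    exact ⟨integrable_zero F ℂ μF, integral_zero F ℂ⟩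

/-- Lemma `extension` of Bezrukavnikov–Kazhdan: for
`G = PGL(2,F)`, `F` of characteristic zero, if `f ∈ S(G)` is such that its
restriction to the set `N̄` of unipotent elements lies in `K_u` (its integral
over the unipotent radical of every Borel subgroup vanishes), then there is
`ε > 0` such that the restriction of `f` to `G^ε = {g : |p(g)| ≤ ε}` is
weightless, i.e. has vanishing integrals over all cosets `l·U_Q` of unipotent
radicals of Borel subgroups `Q = L·U_Q`, `l ∈ L`.  (Restrictions are
implemented as extension-by-zero via `Set.indicator`.) -/
theorem statement6
    (hna : IsNonarchimedean (fun x : F => ‖x‖))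
    (μF : Measure F) [μF.IsAddHaarMeasure]
    (f : PGL2 F → ℂ) (hlc : IsLocallyConstant f) (hcs : HasCompactSupport f)
    (hres : ∀ g : PGL2 F,
      Integrable
        (fun x : F => (unipSet F).indicator f (g * pgl (unip x) * g⁻¹)) μF ∧
      ∫ x : F, (unipSet F).indicator f (g * pgl (unip x) * g⁻¹) ∂μF = 0) :
    ∃ ε : ℝ, 0 < ε ∧
      ∀ (g : PGL2 F) (b : Fˣ),
        Integrable
          (fun x : F =>
            (Geps F ε).indicator f (g * pgl (diagT b * unip x) * g⁻¹)) μF ∧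
        ∫ x : F,
            (Geps F ε).indicator f (g * pgl (diagT b * unip x) * g⁻¹) ∂μF
          = 0 :=
  statement6_general μF f hlc hcs hres
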